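/- arXiv:1501.05245 — 10 statements merged into one kernel-verified Lean document; each statement's English description precedes it below -/
import Mathlib

section
/- Let κ, τ : ℝ → ℝ with κ continuously differentiable and everywhere positive and τ continuous, and set θ(s) = ∫₀ˢ τ(u) du. Define the curve r : ℝ → ℝ³ by r(s) = (s, ∫₀ˢ (∫₀ᵗ κ(u)·cos θ(u) du) dt, ∫₀ˢ (∫₀ᵗ κ(u)·sin θ(u) du) dt). Then for every s the Galilean curvature of r equals κ(s) and the Galilean torsion of r equals τ(s). -/
open Real

/-- Galilean curvature of an admissible curve `η(s) = (s, y s, z s)` in `G₃`: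
`κ_η(s) = √(y''(s)² + z''(s)²)`. -/
noncomputable def galCurvature (η : ℝ → ℝ × ℝ × ℝ) (s : ℝ) : ℝ :=
  Real.sqrt ((deriv (deriv η) s).2.1 ^ 2 + (deriv (deriv η) s).2.2 ^ 2)

/-- Determinant of three vectors in `ℝ³` (as rows). -/
noncomputable def det3 (u v w : ℝ × ℝ × ℝ) : ℝ :=
  Matrix.det !![u.1, u.2.1, u.2.2; v.1, v.2.1, v.2.2; w.1, w.2.1, w.2.2]

/-- Galilean torsion: `τ_η(s) = det(η'(s), η''(s), η'''(s)) / κ_η(s)²`. -/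
noncomputable def galTorsion (η : ℝ → ℝ × ℝ × ℝ) (s : ℝ) : ℝ :=
  det3 (deriv η s) (deriv (deriv η) s) (deriv (deriv (deriv η)) s) /
    (galCurvature η s) ^ 2

/-- Tangent vector `T(s) = η'(s)`. -/
noncomputable def galTangent (η : ℝ → ℝ × ℝ × ℝ) (s : ℝ) : ℝ × ℝ × ℝ :=
  deriv η s

/-- Principal normal `N(s) = (1/κ_η(s)) • (0, y''(s), z''(s))`. -/
noncomputable def galNormal (η : ℝ → ℝ × ℝ × ℝ) (s : ℝ) : ℝ × ℝ × ℝ :=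
  (galCurvature η s)⁻¹ • ((0 : ℝ), (deriv (deriv η) s).2.1, (deriv (deriv η) s).2.2)

/-- Binormal `B(s) = (1/κ_η(s)) • (0, -z''(s), y''(s))`. -/
noncomputable def galBinormal (η : ℝ → ℝ × ℝ × ℝ) (s : ℝ) : ℝ × ℝ × ℝ :=
  (galCurvature η s)⁻¹ • ((0 : ℝ), -(deriv (deriv η) s).2.2, (deriv (deriv η) s).2.1)

/-- Galilean norm of a vector in `G₃`. -/
noncomputable def galNorm (v : ℝ × ℝ × ℝ) : ℝ :=
  if v.1 ≠ 0 then |v.1| else Real.sqrt (v.2.1 ^ 2 + v.2.2 ^ 2)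

/-- TN-Smarandache curve `η_TN = (T+N)/‖T+N‖_G`. -/
noncomputable def smarTN (η : ℝ → ℝ × ℝ × ℝ) (s : ℝ) : ℝ × ℝ × ℝ :=
  (galNorm (galTangent η s + galNormal η s))⁻¹ • (galTangent η s + galNormal η s)

/-- TB-Smarandache curve `η_TB = (T+B)/‖T+B‖_G`. -/
noncomputable def smarTB (η : ℝ → ℝ × ℝ × ℝ) (s : ℝ) : ℝ × ℝ × ℝ :=
  (galNorm (galTangent η s + galBinormal η s))⁻¹ • (galTangent η s + galBinormal η s)

/-- TNB-Smarandache curve `η_TNB = (T+N+B)/‖T+N+B‖_G`. -/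
noncomputable def smarTNB (η : ℝ → ℝ × ℝ × ℝ) (s : ℝ) : ℝ × ℝ × ℝ :=
  (galNorm (galTangent η s + galNormal η s + galBinormal η s))⁻¹ •
    (galTangent η s + galNormal η s + galBinormal η s)

theorem arbitrary_curve_curvature_torsion
    (κ τ : ℝ → ℝ) (hκ : ContDiff ℝ 1 κ) (hκpos : ∀ s, 0 < κ s) (hτ : Continuous τ)
    (θ : ℝ → ℝ) (hθ : ∀ s, θ s = ∫ u in (0:ℝ)..s, τ u)
    (r : ℝ → ℝ × ℝ × ℝ)
    (hr : ∀ s, r s =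
      (s, ∫ t in (0:ℝ)..s, ∫ u in (0:ℝ)..t, κ u * Real.cos (θ u),
          ∫ t in (0:ℝ)..s, ∫ u in (0:ℝ)..t, κ u * Real.sin (θ u))) :
    ∀ s, galCurvature r s = κ s ∧ galTorsion r s = τ s := by
  have hθ' : ∀ x, HasDerivAt θ (τ x) x := by
    intro x
    rw [funext hθ]
    exact (hτ.integral_hasStrictDerivAt 0 x).hasDerivAt
  have hθc : Continuous θ := continuous_iff_continuousAt.2 fun x => (hθ' x).continuousAt
  have hκc : Continuous κ := hκ.continuous
  have hfc : Continuous (fun u => κ u * Real.cos (θ u)) :=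
    hκc.mul (Real.continuous_cos.comp hθc)
  have hgc : Continuous (fun u => κ u * Real.sin (θ u)) :=
    hκc.mul (Real.continuous_sin.comp hθc)
  set F : ℝ → ℝ := fun t => ∫ u in (0:ℝ)..t, κ u * Real.cos (θ u) with hF
  set G : ℝ → ℝ := fun t => ∫ u in (0:ℝ)..t, κ u * Real.sin (θ u) with hG
  have hF' : ∀ x, HasDerivAt F (κ x * Real.cos (θ x)) x := fun x =>
    (hfc.integral_hasStrictDerivAt 0 x).hasDerivAt
  have hG' : ∀ x, HasDerivAt G (κ x * Real.sin (θ x)) x := fun x =>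
    (hgc.integral_hasStrictDerivAt 0 x).hasDerivAt
  have hFc : Continuous F := continuous_iff_continuousAt.2 fun x => (hF' x).continuousAt
  have hGc : Continuous G := continuous_iff_continuousAt.2 fun x => (hG' x).continuousAt
  have hrd : deriv r = fun x => ((1:ℝ), F x, G x) := by
    funext x
    have h : HasDerivAt r ((1:ℝ), F x, G x) x := by
      rw [funext hr]
      exact (hasDerivAt_id x).prodMk
        (((hFc.integral_hasStrictDerivAt 0 x).hasDerivAt).prodMk
          ((hGc.integral_hasStrictDerivAt 0 x).hasDerivAt))
    exact h.deriv
  have hrdd : deriv (deriv r) =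
      fun x => ((0:ℝ), κ x * Real.cos (θ x), κ x * Real.sin (θ x)) := by
    funext x
    rw [hrd]
    exact (((hasDerivAt_const x (1:ℝ)).prodMk ((hF' x).prodMk (hG' x)))).deriv
  intro s
  have hκd : HasDerivAt κ (deriv κ s) s := ((hκ.differentiable one_ne_zero) s).hasDerivAt
  have hy3 : HasDerivAt (fun x => κ x * Real.cos (θ x))
      (deriv κ s * Real.cos (θ s) + κ s * (-Real.sin (θ s) * τ s)) s :=
    hκd.mul (hθ' s).cos
  have hz3 : HasDerivAt (fun x => κ x * Real.sin (θ x))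
      (deriv κ s * Real.sin (θ s) + κ s * (Real.cos (θ s) * τ s)) s :=
    hκd.mul (hθ' s).sin
  have hrddd : deriv (deriv (deriv r)) s =
      ((0:ℝ), deriv κ s * Real.cos (θ s) + κ s * (-Real.sin (θ s) * τ s),
        deriv κ s * Real.sin (θ s) + κ s * (Real.cos (θ s) * τ s)) := by
    rw [hrdd]
    exact ((hasDerivAt_const s (0:ℝ)).prodMk (hy3.prodMk hz3)).deriv
  have hcurv : galCurvature r s = κ s := by
    rw [galCurvature, hrdd]
    have hsq : (κ s * Real.cos (θ s)) ^ 2 + (κ s * Real.sin (θ s)) ^ 2 = κ s ^ 2 := by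
      have := Real.sin_sq_add_cos_sq (θ s)
      nlinarith [this]
    simp only []
    rw [hsq]
    exact Real.sqrt_sq (hκpos s).le
  refine ⟨hcurv, ?_⟩
  rw [galTorsion, hcurv, det3, hrddd, hrdd, hrd]
  norm_num [Matrix.det_fin_three, Matrix.vecHead, Matrix.vecTail, Matrix.cons_val_zero, Matrix.cons_val_one, Matrix.cons_val_two, Matrix.cons_val]
  have hκne : κ s ≠ 0 := (hκpos s).ne'
  rw [div_eq_iff (by positivity)]
  linear_combination (κ s ^ 2 * τ s) * Real.sin_sq_add_cos_sq (θ s)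
end

section
/- Let κ, τ : ℝ → ℝ with κ continuous and everywhere positive and τ continuous, θ(s) = ∫₀ˢ τ(u) du, and r(s) = (s, ∫₀ˢ (∫₀ᵗ κ(u)·cos θ(u) du) dt, ∫₀ˢ (∫₀ᵗ κ(u)·sin θ(u) du) dt). Then the Frenet frame of r is given for every s by T(s) = (1, ∫₀ˢ κ(u)·cos θ(u) du, ∫₀ˢ κ(u)·sin θ(u) du), N(s) = (0, cos θ(s), sin θ(s)), and B(s) = (0, −sin θ(s), cos θ(s)). -/
open Real

private lemma hasDerivAt_prim {f : ℝ → ℝ} (hf : Continuous f) (s : ℝ) :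
    HasDerivAt (fun t => ∫ u in (0:ℝ)..t, f u) (f s) s :=
  intervalIntegral.integral_hasDerivAt_right (hf.intervalIntegrable _ _)
    (hf.stronglyMeasurable.stronglyMeasurableAtFilter) hf.continuousAt

theorem arbitrary_curve_frenet_frame
    (κ τ : ℝ → ℝ) (hκ : Continuous κ) (hκpos : ∀ s, 0 < κ s) (hτ : Continuous τ)
    (θ : ℝ → ℝ) (hθ : ∀ s, θ s = ∫ u in (0:ℝ)..s, τ u)
    (r : ℝ → ℝ × ℝ × ℝ)
    (hr : ∀ s, r s =
      (s, ∫ t in (0:ℝ)..s, ∫ u in (0:ℝ)..t, κ u * Real.cos (θ u),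
          ∫ t in (0:ℝ)..s, ∫ u in (0:ℝ)..t, κ u * Real.sin (θ u))) :
    ∀ s, galTangent r s =
        (1, ∫ u in (0:ℝ)..s, κ u * Real.cos (θ u), ∫ u in (0:ℝ)..s, κ u * Real.sin (θ u)) ∧
      galNormal r s = (0, Real.cos (θ s), Real.sin (θ s)) ∧
      galBinormal r s = (0, -Real.sin (θ s), Real.cos (θ s)) := by
  have hθc : Continuous θ := by
    have h : θ = fun s => ∫ u in (0:ℝ)..s, τ u := funext hθ
    rw [h]
    exact continuous_iff_continuousAt.mpr fun s => (hasDerivAt_prim hτ s).continuousAt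
  set f : ℝ → ℝ := fun u => κ u * Real.cos (θ u) with hf_def
  set g : ℝ → ℝ := fun u => κ u * Real.sin (θ u) with hg_def
  have hfc : Continuous f := hκ.mul (Real.continuous_cos.comp hθc)
  have hgc : Continuous g := hκ.mul (Real.continuous_sin.comp hθc)
  set F : ℝ → ℝ := fun t => ∫ u in (0:ℝ)..t, f u with hF_def
  set G : ℝ → ℝ := fun t => ∫ u in (0:ℝ)..t, g u with hG_def
  have hF : ∀ s, HasDerivAt F (f s) s := hasDerivAt_prim hfc
  have hG : ∀ s, HasDerivAt G (g s) s := hasDerivAt_prim hgc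
  have hFc : Continuous F := continuous_iff_continuousAt.mpr fun s => (hF s).continuousAt
  have hGc : Continuous G := continuous_iff_continuousAt.mpr fun s => (hG s).continuousAt
  set Y : ℝ → ℝ := fun t => ∫ u in (0:ℝ)..t, F u with hY_def
  set Z : ℝ → ℝ := fun t => ∫ u in (0:ℝ)..t, G u with hZ_def
  have hY : ∀ s, HasDerivAt Y (F s) s := hasDerivAt_prim hFc
  have hZ : ∀ s, HasDerivAt Z (G s) s := hasDerivAt_prim hGc
  have hr' : r = fun s => (s, Y s, Z s) := funext hr
  have hd1 : ∀ s, HasDerivAt r (1, F s, G s) s := by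
    intro s
    rw [hr']
    exact (hasDerivAt_id s).prodMk ((hY s).prodMk (hZ s))
  have hdr : deriv r = fun s => ((1:ℝ), F s, G s) := funext fun s => (hd1 s).deriv
  have hd2 : ∀ s, deriv (deriv r) s = ((0:ℝ), f s, g s) := by
    intro s
    rw [hdr]
    exact ((hasDerivAt_const s (1:ℝ)).prodMk ((hF s).prodMk (hG s))).deriv
  intro s
  have hκs := hκpos s
  have hcurv : galCurvature r s = κ s := by
    rw [galCurvature, hd2]
    have h : f s ^ 2 + g s ^ 2 = κ s ^ 2 := by
      simp only [hf_def, hg_def]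
      nlinarith [Real.cos_sq_add_sin_sq (θ s)]
    rw [show ((0:ℝ), f s, g s).2.1 = f s from rfl, show ((0:ℝ), f s, g s).2.2 = g s from rfl,
      h, Real.sqrt_sq hκs.le]
  refine ⟨?_, ?_, ?_⟩
  · rw [galTangent, (hd1 s).deriv]
  · rw [galNormal, hcurv, hd2]
    simp only [Prod.smul_def, smul_eq_mul, hf_def, hg_def]
    rw [Prod.mk.injEq, Prod.mk.injEq]
    exact ⟨by ring, by field_simp [mul_comm], by field_simp [mul_comm]⟩
  · rw [galBinormal, hcurv, hd2]
    simp only [Prod.smul_def, smul_eq_mul, hf_def, hg_def]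
    rw [Prod.mk.injEq, Prod.mk.injEq]
    exact ⟨by ring, by field_simp [mul_comm], by field_simp [mul_comm]⟩
end

section
/- Let κ, τ : ℝ → ℝ with κ continuous and everywhere positive and τ continuous, θ(s) = ∫₀ˢ τ(u) du, and r(s) = (s, ∫₀ˢ (∫₀ᵗ κ(u)·cos θ(u) du) dt, ∫₀ˢ (∫₀ᵗ κ(u)·sin θ(u) du) dt), with Frenet frame T, N, B. Then the Galilean norm of T(s) + N(s) equals 1, and the TN-Smarandache curve of r is r_TN(s) = T(s) + N(s) = (1, cos θ(s) + ∫₀ˢ κ(u)·cos θ(u) du, sin θ(s) + ∫₀ˢ κ(u)·sin θ(u) du). -/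
open Real

theorem arbitrary_curve_TN_smarandache
    (κ τ : ℝ → ℝ) (hκ : Continuous κ) (hκpos : ∀ s, 0 < κ s) (hτ : Continuous τ)
    (θ : ℝ → ℝ) (hθ : ∀ s, θ s = ∫ u in (0:ℝ)..s, τ u)
    (r : ℝ → ℝ × ℝ × ℝ)
    (hr : ∀ s, r s =
      (s, ∫ t in (0:ℝ)..s, ∫ u in (0:ℝ)..t, κ u * Real.cos (θ u),
          ∫ t in (0:ℝ)..s, ∫ u in (0:ℝ)..t, κ u * Real.sin (θ u))) :
    ∀ s, galNorm (galTangent r s + galNormal r s) = 1 ∧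
      smarTN r s = galTangent r s + galNormal r s ∧
      smarTN r s =
        (1, Real.cos (θ s) + ∫ u in (0:ℝ)..s, κ u * Real.cos (θ u),
            Real.sin (θ s) + ∫ u in (0:ℝ)..s, κ u * Real.sin (θ u)) := by

  -- basic derivative lemma for primitives of continuous functions
  have prim : ∀ (f : ℝ → ℝ), Continuous f → ∀ s : ℝ,
      HasDerivAt (fun t => ∫ u in (0:ℝ)..t, f u) (f s) s := fun f hf s =>
    intervalIntegral.integral_hasDerivAt_right (hf.intervalIntegrable 0 s)
      (hf.stronglyMeasurableAtFilter _ _) hf.continuousAt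
  have hθc : Continuous θ := by
    have hθf : θ = fun s => ∫ u in (0:ℝ)..s, τ u := funext hθ
    rw [hθf]
    exact continuous_iff_continuousAt.mpr fun s => (prim τ hτ s).continuousAt
  set f : ℝ → ℝ := fun u => κ u * Real.cos (θ u) with hf
  set g : ℝ → ℝ := fun u => κ u * Real.sin (θ u) with hg
  have hfc : Continuous f := hκ.mul (Real.continuous_cos.comp hθc)
  have hgc : Continuous g := hκ.mul (Real.continuous_sin.comp hθc)
  set F : ℝ → ℝ := fun t => ∫ u in (0:ℝ)..t, f u with hF
  set G : ℝ → ℝ := fun t => ∫ u in (0:ℝ)..t, g u with hG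
  have hF' : ∀ s, HasDerivAt F (f s) s := prim f hfc
  have hG' : ∀ s, HasDerivAt G (g s) s := prim g hgc
  have hFc : Continuous F := continuous_iff_continuousAt.mpr fun s => (hF' s).continuousAt
  have hGc : Continuous G := continuous_iff_continuousAt.mpr fun s => (hG' s).continuousAt
  have hY' : ∀ s, HasDerivAt (fun t => ∫ u in (0:ℝ)..t, F u) (F s) s := prim F hFc
  have hZ' : ∀ s, HasDerivAt (fun t => ∫ u in (0:ℝ)..t, G u) (G s) s := prim G hGc
  have hrf : r = fun s => (s, ∫ t in (0:ℝ)..s, F t, ∫ t in (0:ℝ)..s, G t) := funext hr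
  have hdr : deriv r = fun s => ((1:ℝ), F s, G s) := by
    funext s
    rw [hrf]
    exact (HasDerivAt.prodMk (hasDerivAt_id s) (HasDerivAt.prodMk (hY' s) (hZ' s))).deriv
  have hddr : deriv (deriv r) = fun s => ((0:ℝ), f s, g s) := by
    funext s
    rw [hdr]
    exact (HasDerivAt.prodMk (hasDerivAt_const s (1:ℝ)) (HasDerivAt.prodMk (hF' s) (hG' s))).deriv
  intro s
  have hκs : κ s ≠ 0 := (hκpos s).ne'
  have hcurv : galCurvature r s = κ s := by
    rw [galCurvature, hddr]
    simp only
    have : f s ^ 2 + g s ^ 2 = κ s ^ 2 := by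
      simp only [hf, hg]
      have := Real.sin_sq_add_cos_sq (θ s)
      ring_nf
      nlinarith [Real.sin_sq_add_cos_sq (θ s)]
    rw [this, Real.sqrt_sq (hκpos s).le]
  have hsum : galTangent r s + galNormal r s =
      ((1:ℝ), Real.cos (θ s) + F s, Real.sin (θ s) + G s) := by
    rw [galTangent, galNormal, hcurv, hddr, hdr]
    simp only [Prod.mk_add_mk, Prod.smul_mk, smul_eq_mul, Prod.mk.injEq]
    refine ⟨by ring, ?_, ?_⟩
    · simp only [hf]; field_simp; ring
    · simp only [hg]; field_simp; ring
  have hnorm : galNorm (galTangent r s + galNormal r s) = 1 := by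
    rw [hsum, galNorm]
    norm_num
  refine ⟨hnorm, ?_, ?_⟩
  · rw [smarTN, hnorm]; simp
  · rw [smarTN, hnorm, hsum]; simp [hF, hG]
end

section
/- Let m ≠ 0 be a real constant, κ : ℝ → ℝ continuously differentiable and everywhere positive, and φ(s) = m·∫₀ˢ κ(u) du. Define the general helix α(s) = (s, (1/m)·∫₀ˢ sin φ(t) dt, −(1/m)·∫₀ˢ cos φ(t) dt). Then for every s the Galilean curvature of α equals κ(s) and the Galilean torsion of α equals m·κ(s); in particular the ratio (torsion)/(curvature) of α is the constant m. -/
open Real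

theorem general_helix_curvature_torsion
    (m : ℝ) (hm : m ≠ 0) (κ : ℝ → ℝ) (hκ : ContDiff ℝ 1 κ) (hκpos : ∀ s, 0 < κ s)
    (φ : ℝ → ℝ) (hφ : ∀ s, φ s = m * ∫ u in (0:ℝ)..s, κ u)
    (α : ℝ → ℝ × ℝ × ℝ)
    (hα : ∀ s, α s =
      (s, (1/m) * ∫ t in (0:ℝ)..s, Real.sin (φ t),
          -(1/m) * ∫ t in (0:ℝ)..s, Real.cos (φ t))) :
    ∀ s, galCurvature α s = κ s ∧ galTorsion α s = m * κ s ∧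
      galTorsion α s / galCurvature α s = m := by
  have hκc : Continuous κ := hκ.continuous
  -- derivative of φ
  have hφ' : ∀ s, HasDerivAt φ (m * κ s) s := by
    intro s
    have h1 : HasDerivAt (fun s => ∫ u in (0:ℝ)..s, κ u) (κ s) s :=
      (hκc.integral_hasStrictDerivAt 0 s).hasDerivAt
    have h2 := h1.const_mul m
    exact h2.congr_of_eventuallyEq (by filter_upwards with t using hφ t)
  have hφc : Continuous φ := by
    rw [continuous_iff_continuousAt]; exact fun s => (hφ' s).continuousAt
  -- first derivative of α
  have hy' : ∀ s, HasDerivAt (fun s => (1/m) * ∫ t in (0:ℝ)..s, Real.sin (φ t))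
      ((1/m) * Real.sin (φ s)) s := fun s =>
    ((Real.continuous_sin.comp hφc).integral_hasStrictDerivAt 0 s).hasDerivAt.const_mul _
  have hz' : ∀ s, HasDerivAt (fun s => -(1/m) * ∫ t in (0:ℝ)..s, Real.cos (φ t))
      (-(1/m) * Real.cos (φ s)) s := fun s =>
    ((Real.continuous_cos.comp hφc).integral_hasStrictDerivAt 0 s).hasDerivAt.const_mul _
  have hα1 : ∀ s, HasDerivAt α (1, (1/m) * Real.sin (φ s), -(1/m) * Real.cos (φ s)) s := by
    intro s
    have : HasDerivAt (fun s : ℝ => ((s : ℝ),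
        (1/m) * ∫ t in (0:ℝ)..s, Real.sin (φ t),
        -(1/m) * ∫ t in (0:ℝ)..s, Real.cos (φ t)))
        (1, (1/m) * Real.sin (φ s), -(1/m) * Real.cos (φ s)) s :=
      HasDerivAt.prodMk (hasDerivAt_id s) ((hy' s).prodMk (hz' s))
    exact this.congr_of_eventuallyEq (by filter_upwards with t using (hα t))
  have hdα : deriv α = fun s => (1, (1/m) * Real.sin (φ s), -(1/m) * Real.cos (φ s)) :=
    funext fun s => (hα1 s).deriv
  -- second derivative
  have hκd : ∀ s, HasDerivAt κ (deriv κ s) s := fun s =>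
    ((hκ.differentiable one_ne_zero) s).hasDerivAt
  have hsin : ∀ s, HasDerivAt (fun s => (1/m) * Real.sin (φ s)) (κ s * Real.cos (φ s)) s := by
    intro s
    have := ((hφ' s).sin).const_mul (1/m)
    refine this.congr_deriv ?_
    linear_combination (κ s * Real.cos (φ s)) * mul_inv_cancel₀ hm
  have hcos : ∀ s, HasDerivAt (fun s => -(1/m) * Real.cos (φ s)) (κ s * Real.sin (φ s)) s := by
    intro s
    have := ((hφ' s).cos).const_mul (-(1/m))
    refine this.congr_deriv ?_
    linear_combination (κ s * Real.sin (φ s)) * mul_inv_cancel₀ hm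
  have hα2 : ∀ s, HasDerivAt (deriv α) (0, κ s * Real.cos (φ s), κ s * Real.sin (φ s)) s := by
    intro s
    rw [hdα]
    exact HasDerivAt.prodMk (hasDerivAt_const s (1:ℝ)) ((hsin s).prodMk (hcos s))
  have hddα : deriv (deriv α) = fun s => ((0:ℝ), κ s * Real.cos (φ s), κ s * Real.sin (φ s)) :=
    funext fun s => (hα2 s).deriv
  -- third derivative
  have hα3 : ∀ s, HasDerivAt (deriv (deriv α))
      (0, deriv κ s * Real.cos (φ s) - κ s * (Real.sin (φ s) * (m * κ s)),
        deriv κ s * Real.sin (φ s) + κ s * (Real.cos (φ s) * (m * κ s))) s := by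
    intro s
    rw [hddα]
    refine HasDerivAt.prodMk (hasDerivAt_const s (0:ℝ)) (HasDerivAt.prodMk ?_ ?_)
    · have := (hκd s).mul ((hφ' s).cos)
      refine this.congr_deriv ?_; ring
    · exact (hκd s).mul ((hφ' s).sin)
  intro s
  have hcurv : galCurvature α s = κ s := by
    rw [galCurvature, hddα]
    rw [show (κ s * Real.cos (φ s)) ^ 2 + (κ s * Real.sin (φ s)) ^ 2 = κ s ^ 2 by
      have := Real.sin_sq_add_cos_sq (φ s); nlinarith [this]]
    exact Real.sqrt_sq (hκpos s).le
  have hκne : κ s ≠ 0 := (hκpos s).ne'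
  have htors : galTorsion α s = m * κ s := by
    rw [galTorsion, hcurv, det3, (hα3 s).deriv, hddα, (hα1 s).deriv]
    rw [div_eq_iff (pow_ne_zero 2 hκne)]
    simp [Matrix.det_fin_three, Matrix.vecHead, Matrix.vecTail]
    linear_combination (m * κ s ^ 3) * Real.sin_sq_add_cos_sq (φ s)
  exact ⟨hcurv, htors, by rw [htors, hcurv]; field_simp⟩
end

section
/- Let m ≠ 0 be a real constant, κ : ℝ → ℝ continuous and everywhere positive, φ(s) = m·∫₀ˢ κ(u) du, and α(s) = (s, (1/m)·∫₀ˢ sin φ(t) dt, −(1/m)·∫₀ˢ cos φ(t) dt). Then the Frenet frame of α is given for every s by T(s) = (1, (1/m)·sin φ(s), −(1/m)·cos φ(s)), N(s) = (0, cos φ(s), sin φ(s)), and B(s) = (0, −sin φ(s), cos φ(s)). -/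
open Real

theorem general_helix_frenet_frame
    (m : ℝ) (hm : m ≠ 0) (κ : ℝ → ℝ) (hκ : Continuous κ) (hκpos : ∀ s, 0 < κ s)
    (φ : ℝ → ℝ) (hφ : ∀ s, φ s = m * ∫ u in (0:ℝ)..s, κ u)
    (α : ℝ → ℝ × ℝ × ℝ)
    (hα : ∀ s, α s =
      (s, (1/m) * ∫ t in (0:ℝ)..s, Real.sin (φ t),
          -(1/m) * ∫ t in (0:ℝ)..s, Real.cos (φ t))) :
    ∀ s, galTangent α s = (1, (1/m) * Real.sin (φ s), -(1/m) * Real.cos (φ s)) ∧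
      galNormal α s = (0, Real.cos (φ s), Real.sin (φ s)) ∧
      galBinormal α s = (0, -Real.sin (φ s), Real.cos (φ s)) := by
  -- derivative of φ
  have hφ' : ∀ s, HasDerivAt φ (m * κ s) s := by
    intro s
    have h1 : HasDerivAt (fun u => ∫ x in (0:ℝ)..u, κ x) (κ s) s :=
      (hκ.integral_hasStrictDerivAt 0 s).hasDerivAt
    have h2 := h1.const_mul m
    exact h2.congr_of_eventuallyEq (Filter.Eventually.of_forall hφ)
  have hφc : Continuous φ := by
    have : Differentiable ℝ φ := fun s => (hφ' s).differentiableAt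
    exact this.continuous
  -- continuity of sin ∘ φ and cos ∘ φ
  have hsc : Continuous (fun t => Real.sin (φ t)) := Real.continuous_sin.comp hφc
  have hcc : Continuous (fun t => Real.cos (φ t)) := Real.continuous_cos.comp hφc
  -- first derivative of α
  have hT : ∀ s, HasDerivAt α
      ((1 : ℝ), (1/m) * Real.sin (φ s), -(1/m) * Real.cos (φ s)) s := by
    intro s
    have h1 : HasDerivAt (fun u : ℝ => u) 1 s := hasDerivAt_id s
    have h2 : HasDerivAt (fun u => (1/m) * ∫ t in (0:ℝ)..u, Real.sin (φ t))
        ((1/m) * Real.sin (φ s)) s :=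
      ((hsc.integral_hasStrictDerivAt 0 s).hasDerivAt).const_mul (1/m)
    have h3 : HasDerivAt (fun u => -(1/m) * ∫ t in (0:ℝ)..u, Real.cos (φ t))
        (-(1/m) * Real.cos (φ s)) s :=
      ((hcc.integral_hasStrictDerivAt 0 s).hasDerivAt).const_mul (-(1/m))
    exact (h1.prodMk (h2.prodMk h3)).congr_of_eventuallyEq (Filter.Eventually.of_forall hα)
  have hderiv1 : deriv α = fun s =>
      ((1 : ℝ), (1/m) * Real.sin (φ s), -(1/m) * Real.cos (φ s)) :=
    funext fun s => (hT s).deriv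
  -- second derivative of α
  have hN : ∀ s, HasDerivAt (deriv α)
      ((0 : ℝ), κ s * Real.cos (φ s), κ s * Real.sin (φ s)) s := by
    intro s
    rw [hderiv1]
    have h1 : HasDerivAt (fun _ : ℝ => (1 : ℝ)) 0 s := hasDerivAt_const s 1
    have hsin : HasDerivAt (fun u => Real.sin (φ u)) (Real.cos (φ s) * (m * κ s)) s :=
      (Real.hasDerivAt_sin (φ s)).comp s (hφ' s)
    have hcos : HasDerivAt (fun u => Real.cos (φ u)) (-Real.sin (φ s) * (m * κ s)) s :=
      (Real.hasDerivAt_cos (φ s)).comp s (hφ' s)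
    have h2 := hsin.const_mul (1/m)
    have h3 := hcos.const_mul (-(1/m))
    have e2 : (1/m) * (Real.cos (φ s) * (m * κ s)) = κ s * Real.cos (φ s) := by
      field_simp
    have e3 : -(1/m) * (-Real.sin (φ s) * (m * κ s)) = κ s * Real.sin (φ s) := by
      field_simp
    rw [e2] at h2; rw [e3] at h3
    exact h1.prodMk (h2.prodMk h3)
  have hderiv2 : deriv (deriv α) = fun s =>
      ((0 : ℝ), κ s * Real.cos (φ s), κ s * Real.sin (φ s)) :=
    funext fun s => (hN s).deriv
  intro s
  have hκs := hκpos s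
  have hcurv : galCurvature α s = κ s := by
    simp only [galCurvature, hderiv2]
    have : (κ s * Real.cos (φ s)) ^ 2 + (κ s * Real.sin (φ s)) ^ 2 = (κ s) ^ 2 := by
      have := Real.sin_sq_add_cos_sq (φ s); nlinarith [this]
    rw [this, Real.sqrt_sq hκs.le]
  refine ⟨?_, ?_, ?_⟩
  · simp only [galTangent, hderiv1]
  · simp only [galNormal, hcurv, hderiv2, Prod.smul_mk, smul_eq_mul]
    rw [Prod.ext_iff, Prod.ext_iff]
    refine ⟨by simp, ?_, ?_⟩ <;> (field_simp; try ring)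
  · simp only [galBinormal, hcurv, hderiv2, Prod.smul_mk, smul_eq_mul]
    rw [Prod.ext_iff, Prod.ext_iff]
    refine ⟨by simp, ?_, ?_⟩ <;> (field_simp; try ring)
end

section
/- Let m ≠ 0 be a real constant, κ : ℝ → ℝ continuous and everywhere positive, φ(s) = m·∫₀ˢ κ(u) du, and α(s) = (s, (1/m)·∫₀ˢ sin φ(t) dt, −(1/m)·∫₀ˢ cos φ(t) dt), with Frenet frame T, N, B. Then the Smarandache curves of α are α_TN(s) = (1, cos φ(s) + (1/m)·sin φ(s), −(1/m)·cos φ(s) + sin φ(s)), α_TB(s) = (1, −((m−1)/m)·sin φ(s), ((m−1)/m)·cos φ(s)), and α_TNB(s) = (1, cos φ(s) − ((m−1)/m)·sin φ(s), ((m−1)/m)·cos φ(s) + sin φ(s)). -/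
open Real

theorem general_helix_smarandache_curves
    (m : ℝ) (hm : m ≠ 0) (κ : ℝ → ℝ) (hκ : Continuous κ) (hκpos : ∀ s, 0 < κ s)
    (φ : ℝ → ℝ) (hφ : ∀ s, φ s = m * ∫ u in (0:ℝ)..s, κ u)
    (α : ℝ → ℝ × ℝ × ℝ)
    (hα : ∀ s, α s =
      (s, (1/m) * ∫ t in (0:ℝ)..s, Real.sin (φ t),
          -(1/m) * ∫ t in (0:ℝ)..s, Real.cos (φ t))) :
    ∀ s, smarTN α s =
        (1, Real.cos (φ s) + (1/m) * Real.sin (φ s),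
            -(1/m) * Real.cos (φ s) + Real.sin (φ s)) ∧
      smarTB α s =
        (1, -((m - 1)/m) * Real.sin (φ s), ((m - 1)/m) * Real.cos (φ s)) ∧
      smarTNB α s =
        (1, Real.cos (φ s) - ((m - 1)/m) * Real.sin (φ s),
            ((m - 1)/m) * Real.cos (φ s) + Real.sin (φ s)) := by

  -- derivative of the integral of a continuous function
  have hint : ∀ (f : ℝ → ℝ), Continuous f → ∀ s : ℝ,
      HasDerivAt (fun t => ∫ u in (0:ℝ)..t, f u) (f s) s := by
    intro f hf s
    exact intervalIntegral.integral_hasDerivAt_right (hf.intervalIntegrable 0 s)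
      (hf.stronglyMeasurableAtFilter _ _) hf.continuousAt
  have hφd : ∀ s, HasDerivAt φ (m * κ s) s := by
    intro s
    have : φ = fun t => m * ∫ u in (0:ℝ)..t, κ u := funext hφ
    rw [this]
    exact (hint κ hκ s).const_mul m
  have hφc : Continuous φ :=
    continuous_iff_continuousAt.2 fun s => (hφd s).continuousAt
  have hT : ∀ s, HasDerivAt α (1, (1/m) * Real.sin (φ s), -(1/m) * Real.cos (φ s)) s := by
    intro s
    have hα' : α = fun s => ((s : ℝ), (1/m) * ∫ t in (0:ℝ)..s, Real.sin (φ t),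
        -(1/m) * ∫ t in (0:ℝ)..s, Real.cos (φ t)) := funext hα
    rw [hα']
    exact (hasDerivAt_id s).prodMk
      (((hint _ (Real.continuous_sin.comp hφc) s).const_mul (1/m)).prodMk
        ((hint _ (Real.continuous_cos.comp hφc) s).const_mul (-(1/m))))
  have hd1 : deriv α = fun s => ((1:ℝ), (1/m) * Real.sin (φ s), -(1/m) * Real.cos (φ s)) :=
    funext fun s => (hT s).deriv
  have hT2 : ∀ s, HasDerivAt (deriv α)
      (0, κ s * Real.cos (φ s), κ s * Real.sin (φ s)) s := by
    intro s
    rw [hd1]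
    have h2 : HasDerivAt (fun s => (1/m) * Real.sin (φ s)) (κ s * Real.cos (φ s)) s := by
      have := ((Real.hasDerivAt_sin (φ s)).comp s (hφd s)).const_mul (1/m)
      refine this.congr_deriv ?_
      field_simp
    have h3 : HasDerivAt (fun s => -(1/m) * Real.cos (φ s)) (κ s * Real.sin (φ s)) s := by
      have := ((Real.hasDerivAt_cos (φ s)).comp s (hφd s)).const_mul (-(1/m))
      refine this.congr_deriv ?_
      field_simp
    exact (hasDerivAt_const s (1:ℝ)).prodMk (h2.prodMk h3)
  have hd2 : deriv (deriv α) = fun s =>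
      ((0:ℝ), κ s * Real.cos (φ s), κ s * Real.sin (φ s)) :=
    funext fun s => (hT2 s).deriv
  intro s
  have hκne : κ s ≠ 0 := (hκpos s).ne'
  have hcurv : galCurvature α s = κ s := by
    rw [galCurvature, hd2]
    have : (κ s * Real.cos (φ s)) ^ 2 + (κ s * Real.sin (φ s)) ^ 2 = κ s ^ 2 := by
      have := Real.sin_sq_add_cos_sq (φ s); nlinarith [this]
    rw [this, Real.sqrt_sq (hκpos s).le]
  have hTval : galTangent α s = (1, (1/m) * Real.sin (φ s), -(1/m) * Real.cos (φ s)) := by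
    rw [galTangent, hd1]
  have hNval : galNormal α s = (0, Real.cos (φ s), Real.sin (φ s)) := by
    rw [galNormal, hcurv, hd2]
    simp only [Prod.smul_mk, smul_eq_mul]
    refine Prod.ext (by simp) (Prod.ext ?_ ?_) <;> field_simp <;> try ring
  have hBval : galBinormal α s = (0, -Real.sin (φ s), Real.cos (φ s)) := by
    rw [galBinormal, hcurv, hd2]
    simp only [Prod.smul_mk, smul_eq_mul]
    refine Prod.ext (by simp) (Prod.ext ?_ ?_) <;> field_simp <;> try ring
  refine ⟨?_, ?_, ?_⟩
  · rw [smarTN, hTval, hNval]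
    simp only [Prod.mk_add_mk, galNorm]
    norm_num [Prod.ext_iff]
    all_goals try constructor
    all_goals field_simp
    all_goals ring
  · rw [smarTB, hTval, hBval]
    simp only [Prod.mk_add_mk, galNorm]
    norm_num [Prod.ext_iff]
    all_goals try constructor
    all_goals field_simp
    all_goals ring
  · rw [smarTNB, hTval, hNval, hBval]
    simp only [Prod.mk_add_mk, galNorm]
    norm_num [Prod.ext_iff]
    all_goals try constructor
    all_goals field_simp
    all_goals ring
end

section
/- Let a > 0 be a real constant, τ : ℝ → ℝ continuous, and θ(s) = ∫₀ˢ τ(u) du. Define the Salkowski curve γ(s) = (s, a·∫₀ˢ (∫₀ᵗ cos θ(u) du) dt, a·∫₀ˢ (∫₀ᵗ sin θ(u) du) dt). Then for every s the Galilean curvature of γ equals the constant a and the Galilean torsion of γ equals τ(s). -/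
open Real

theorem salkowski_curvature_torsion
    (a : ℝ) (ha : 0 < a) (τ : ℝ → ℝ) (hτ : Continuous τ)
    (θ : ℝ → ℝ) (hθ : ∀ s, θ s = ∫ u in (0:ℝ)..s, τ u)
    (γ : ℝ → ℝ × ℝ × ℝ)
    (hγ : ∀ s, γ s =
      (s, a * ∫ t in (0:ℝ)..s, ∫ u in (0:ℝ)..t, Real.cos (θ u),
          a * ∫ t in (0:ℝ)..s, ∫ u in (0:ℝ)..t, Real.sin (θ u))) :
    ∀ s, galCurvature γ s = a ∧ galTorsion γ s = τ s := by
    -- θ has derivative τ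
  have hθfun : θ = fun s => ∫ u in (0:ℝ)..s, τ u := funext hθ
  have hθ' : ∀ s, HasDerivAt θ (τ s) s := by
    intro s
    rw [hθfun]
    exact intervalIntegral.integral_hasDerivAt_right (hτ.intervalIntegrable 0 s)
      (hτ.stronglyMeasurableAtFilter _ _) hτ.continuousAt
  have hθc : Continuous θ := by
    refine continuous_iff_continuousAt.mpr fun s => ((hθ' s).differentiableAt).continuousAt
  set Y1 : ℝ → ℝ := fun s => ∫ u in (0:ℝ)..s, Real.cos (θ u) with hY1
  set Z1 : ℝ → ℝ := fun s => ∫ u in (0:ℝ)..s, Real.sin (θ u) with hZ1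
  have hcosc : Continuous fun u => Real.cos (θ u) := Real.continuous_cos.comp hθc
  have hsinc : Continuous fun u => Real.sin (θ u) := Real.continuous_sin.comp hθc
  have hY1' : ∀ s, HasDerivAt Y1 (Real.cos (θ s)) s := fun s =>
    intervalIntegral.integral_hasDerivAt_right (hcosc.intervalIntegrable 0 s)
      (hcosc.stronglyMeasurableAtFilter _ _) hcosc.continuousAt
  have hZ1' : ∀ s, HasDerivAt Z1 (Real.sin (θ s)) s := fun s =>
    intervalIntegral.integral_hasDerivAt_right (hsinc.intervalIntegrable 0 s)
      (hsinc.stronglyMeasurableAtFilter _ _) hsinc.continuousAt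
  have hY1c : Continuous Y1 := continuous_iff_continuousAt.mpr fun s =>
    ((hY1' s).differentiableAt).continuousAt
  have hZ1c : Continuous Z1 := continuous_iff_continuousAt.mpr fun s =>
    ((hZ1' s).differentiableAt).continuousAt
  have hγfun : γ = fun s => (s, a * ∫ t in (0:ℝ)..s, Y1 t, a * ∫ t in (0:ℝ)..s, Z1 t) :=
    funext hγ
  -- first derivative
  have hγ' : ∀ s, HasDerivAt γ (1, a * Y1 s, a * Z1 s) s := by
    intro s
    rw [hγfun]
    refine (hasDerivAt_id s).prodMk (HasDerivAt.prodMk ?_ ?_)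
    · exact ((intervalIntegral.integral_hasDerivAt_right (hY1c.intervalIntegrable 0 s)
        (hY1c.stronglyMeasurableAtFilter _ _) hY1c.continuousAt).const_mul a)
    · exact ((intervalIntegral.integral_hasDerivAt_right (hZ1c.intervalIntegrable 0 s)
        (hZ1c.stronglyMeasurableAtFilter _ _) hZ1c.continuousAt).const_mul a)
  have hd1 : deriv γ = fun s => ((1:ℝ), a * Y1 s, a * Z1 s) := funext fun s => (hγ' s).deriv
  -- second derivative
  have hγ'' : ∀ s, HasDerivAt (deriv γ)
      (0, a * Real.cos (θ s), a * Real.sin (θ s)) s := by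
    intro s
    rw [hd1]
    exact (hasDerivAt_const s (1:ℝ)).prodMk
      (((hY1' s).const_mul a).prodMk ((hZ1' s).const_mul a))
  have hd2 : deriv (deriv γ) = fun s => ((0:ℝ), a * Real.cos (θ s), a * Real.sin (θ s)) :=
    funext fun s => (hγ'' s).deriv
  -- third derivative
  have hγ''' : ∀ s, HasDerivAt (deriv (deriv γ))
      (0, a * (-Real.sin (θ s) * τ s), a * (Real.cos (θ s) * τ s)) s := by
    intro s
    rw [hd2]
    exact (hasDerivAt_const s (0:ℝ)).prodMk
      ((((hθ' s).cos).const_mul a).prodMk (((hθ' s).sin).const_mul a))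
  have hd3 : deriv (deriv (deriv γ)) =
      fun s => ((0:ℝ), a * (-Real.sin (θ s) * τ s), a * (Real.cos (θ s) * τ s)) :=
    funext fun s => (hγ''' s).deriv
  intro s
  have hk : galCurvature γ s = a := by
    rw [galCurvature, hd2]
    have : (a * Real.cos (θ s)) ^ 2 + (a * Real.sin (θ s)) ^ 2 = a ^ 2 := by
      have := Real.sin_sq_add_cos_sq (θ s); ring_nf; nlinarith [this]
    rw [this]
    exact Real.sqrt_sq ha.le
  refine ⟨hk, ?_⟩
  rw [galTorsion, hk, det3, hd3, hd2, hd1]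
  have hc := Real.sin_sq_add_cos_sq (θ s)
  simp [Matrix.det_fin_three, Matrix.vecHead, Matrix.vecTail]
  field_simp
  linear_combination τ s * hc
end

section
/- Let a be a real constant and κ : ℝ → ℝ continuously differentiable and everywhere positive. Define the Anti-Salkowski curve δ(s) = (s, ∫₀ˢ (∫₀ᵗ κ(u)·cos(au) du) dt, ∫₀ˢ (∫₀ᵗ κ(u)·sin(au) du) dt). Then for every s the Galilean curvature of δ equals κ(s) and the Galilean torsion of δ equals the constant a. -/
open Real

theorem anti_salkowski_curvature_torsion
    (a : ℝ) (κ : ℝ → ℝ) (hκ : ContDiff ℝ 1 κ) (hκpos : ∀ s, 0 < κ s)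
    (δ : ℝ → ℝ × ℝ × ℝ)
    (hδ : ∀ s, δ s =
      (s, ∫ t in (0:ℝ)..s, ∫ u in (0:ℝ)..t, κ u * Real.cos (a * u),
          ∫ t in (0:ℝ)..s, ∫ u in (0:ℝ)..t, κ u * Real.sin (a * u))) :
    ∀ s, galCurvature δ s = κ s ∧ galTorsion δ s = a := by

  -- abbreviations
  intro s
  set c : ℝ → ℝ := fun u => κ u * Real.cos (a * u) with hc_def
  set sn : ℝ → ℝ := fun u => κ u * Real.sin (a * u) with hsn_def
  have hκc : Continuous κ := hκ.continuous
  have hlin : Continuous fun u : ℝ => a * u := continuous_const.mul continuous_id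
  have hc : Continuous c := hκc.mul (Real.continuous_cos.comp hlin)
  have hsn : Continuous sn := hκc.mul (Real.continuous_sin.comp hlin)
  set f : ℝ → ℝ := fun t => ∫ u in (0:ℝ)..t, c u with hf_def
  set g : ℝ → ℝ := fun t => ∫ u in (0:ℝ)..t, sn u with hg_def
  have hf : ∀ t, HasDerivAt f (c t) t := fun t =>
    (hc.integral_hasStrictDerivAt 0 t).hasDerivAt
  have hg : ∀ t, HasDerivAt g (sn t) t := fun t =>
    (hsn.integral_hasStrictDerivAt 0 t).hasDerivAt
  have hfc : Continuous f := by
    apply continuous_iff_continuousAt.2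
    exact fun t => (hf t).continuousAt
  have hgc : Continuous g := by
    apply continuous_iff_continuousAt.2
    exact fun t => (hg t).continuousAt
  set Y : ℝ → ℝ := fun t => ∫ u in (0:ℝ)..t, f u with hY_def
  set Z : ℝ → ℝ := fun t => ∫ u in (0:ℝ)..t, g u with hZ_def
  have hδeq : δ = fun s => ((s : ℝ), Y s, Z s) := funext hδ
  -- first derivative
  have h1 : deriv δ = fun t => ((1 : ℝ), f t, g t) := by
    funext t
    have : HasDerivAt δ ((1 : ℝ), f t, g t) t := by
      rw [hδeq]
      exact HasDerivAt.prodMk (hasDerivAt_id t)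
        (HasDerivAt.prodMk ((hfc.integral_hasStrictDerivAt 0 t).hasDerivAt)
          ((hgc.integral_hasStrictDerivAt 0 t).hasDerivAt) :
            HasDerivAt (fun x => (Y x, Z x)) (f t, g t) t)
    exact this.deriv
  -- second derivative
  have h2 : deriv (deriv δ) = fun t => ((0 : ℝ), c t, sn t) := by
    funext t
    rw [h1]
    exact (HasDerivAt.prodMk (hasDerivAt_const t (1 : ℝ)) (HasDerivAt.prodMk (hf t) (hg t))).deriv
  -- third derivative at s
  have hκd : HasDerivAt κ (deriv κ s) s :=
    (hκ.differentiable one_ne_zero s).hasDerivAt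
  have hcosd : HasDerivAt (fun u : ℝ => Real.cos (a * u)) (-Real.sin (a * s) * a) s := by
    have := (Real.hasDerivAt_cos (a * s)).comp s ((hasDerivAt_id s).const_mul a)
    simpa [mul_comm, Function.comp_def] using this
  have hsind : HasDerivAt (fun u : ℝ => Real.sin (a * u)) (Real.cos (a * s) * a) s := by
    have := (Real.hasDerivAt_sin (a * s)).comp s ((hasDerivAt_id s).const_mul a)
    simpa [mul_comm, Function.comp_def] using this
  have hcd : HasDerivAt c (deriv κ s * Real.cos (a * s) + κ s * (-Real.sin (a * s) * a)) s :=
    hκd.mul hcosd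
  have hsnd : HasDerivAt sn (deriv κ s * Real.sin (a * s) + κ s * (Real.cos (a * s) * a)) s :=
    hκd.mul hsind
  have h3 : deriv (deriv (deriv δ)) s =
      ((0 : ℝ), deriv κ s * Real.cos (a * s) + κ s * (-Real.sin (a * s) * a),
        deriv κ s * Real.sin (a * s) + κ s * (Real.cos (a * s) * a)) := by
    rw [h2]
    exact (HasDerivAt.prodMk (hasDerivAt_const s (0 : ℝ)) (HasDerivAt.prodMk hcd hsnd)).deriv
  have hκs := (hκpos s).le
  have hsq : c s ^ 2 + sn s ^ 2 = κ s ^ 2 := by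
    have := Real.sin_sq_add_cos_sq (a * s)
    simp only [hc_def, hsn_def]
    nlinarith [this]
  have hcurv : galCurvature δ s = κ s := by
    rw [galCurvature, h2]
    simpa [hsq] using Real.sqrt_sq hκs
  refine ⟨hcurv, ?_⟩
  rw [galTorsion, hcurv, h3, h2, h1, det3]
  simp [Matrix.det_fin_three, Matrix.vecHead, Matrix.vecTail]
  have hκ2 : κ s ^ 2 ≠ 0 := pow_ne_zero 2 (hκpos s).ne'
  have hκ1 : κ s ≠ 0 := (hκpos s).ne'
  field_simp
  simp only [hc_def, hsn_def]
  linear_combination a * κ s ^ 2 * Real.sin_sq_add_cos_sq (a * s)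
end

section
/- Let a be a real constant, κ : ℝ → ℝ continuous and everywhere positive, and δ(s) = (s, ∫₀ˢ (∫₀ᵗ κ(u)·cos(au) du) dt, ∫₀ˢ (∫₀ᵗ κ(u)·sin(au) du) dt), with Frenet frame T, N, B. Then T(s) = (1, ∫₀ˢ κ(u)·cos(au) du, ∫₀ˢ κ(u)·sin(au) du), N(s) = (0, cos(as), sin(as)), B(s) = (0, −sin(as), cos(as)), and the Smarandache curves of δ are δ_TN(s) = (1, cos(as) + ∫₀ˢ κ(u)·cos(au) du, ∫₀ˢ κ(u)·sin(au) du + sin(as)), δ_TB(s) = (1, ∫₀ˢ κ(u)·cos(au) du − sin(as), cos(as) + ∫₀ˢ κ(u)·sin(au) du), and δ_TNB(s) = (1, cos(as) + ∫₀ˢ κ(u)·cos(au) du − sin(as), cos(as) + ∫₀ˢ κ(u)·sin(au) du + sin(as)). -/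
open Real

theorem anti_salkowski_frame_and_smarandache
    (a : ℝ) (κ : ℝ → ℝ) (hκ : Continuous κ) (hκpos : ∀ s, 0 < κ s)
    (δ : ℝ → ℝ × ℝ × ℝ)
    (hδ : ∀ s, δ s =
      (s, ∫ t in (0:ℝ)..s, ∫ u in (0:ℝ)..t, κ u * Real.cos (a * u),
          ∫ t in (0:ℝ)..s, ∫ u in (0:ℝ)..t, κ u * Real.sin (a * u))) :
    ∀ s, galTangent δ s =
        (1, ∫ u in (0:ℝ)..s, κ u * Real.cos (a * u), ∫ u in (0:ℝ)..s, κ u * Real.sin (a * u)) ∧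
      galNormal δ s = (0, Real.cos (a * s), Real.sin (a * s)) ∧
      galBinormal δ s = (0, -Real.sin (a * s), Real.cos (a * s)) ∧
      smarTN δ s =
        (1, Real.cos (a * s) + ∫ u in (0:ℝ)..s, κ u * Real.cos (a * u),
            (∫ u in (0:ℝ)..s, κ u * Real.sin (a * u)) + Real.sin (a * s)) ∧
      smarTB δ s =
        (1, (∫ u in (0:ℝ)..s, κ u * Real.cos (a * u)) - Real.sin (a * s),
            Real.cos (a * s) + ∫ u in (0:ℝ)..s, κ u * Real.sin (a * u)) ∧
      smarTNB δ s =
        (1, Real.cos (a * s) + (∫ u in (0:ℝ)..s, κ u * Real.cos (a * u)) - Real.sin (a * s),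
            Real.cos (a * s) + (∫ u in (0:ℝ)..s, κ u * Real.sin (a * u)) + Real.sin (a * s)) := by
  intro s
  set f : ℝ → ℝ := fun u => κ u * Real.cos (a * u) with hf
  set g : ℝ → ℝ := fun u => κ u * Real.sin (a * u) with hg
  have hfc : Continuous f := hκ.mul (Real.continuous_cos.comp (continuous_const.mul continuous_id))
  have hgc : Continuous g := hκ.mul (Real.continuous_sin.comp (continuous_const.mul continuous_id))
  set F : ℝ → ℝ := fun t => ∫ u in (0:ℝ)..t, f u with hF
  set G : ℝ → ℝ := fun t => ∫ u in (0:ℝ)..t, g u with hG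
  -- first derivative
  have hδeq : δ = fun s => (s, ∫ t in (0:ℝ)..s, F t, ∫ t in (0:ℝ)..s, G t) := funext hδ
  have hFc : Continuous F := by
    have : ∀ t, HasDerivAt F (f t) t := fun t => (hfc.integral_hasStrictDerivAt 0 t).hasDerivAt
    have hd : Differentiable ℝ _ := fun t => (this t).differentiableAt
    exact hd.continuous
  have hGc : Continuous G := by
    have : ∀ t, HasDerivAt G (g t) t := fun t => (hgc.integral_hasStrictDerivAt 0 t).hasDerivAt
    have hd : Differentiable ℝ _ := fun t => (this t).differentiableAt
    exact hd.continuous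
  have hd1 : ∀ t, HasDerivAt δ (1, F t, G t) t := by
    intro t
    rw [hδeq]
    exact (hasDerivAt_id t).prodMk
      (((hFc.integral_hasStrictDerivAt 0 t).hasDerivAt).prodMk
        ((hGc.integral_hasStrictDerivAt 0 t).hasDerivAt))
  have hT : deriv δ = fun t => ((1 : ℝ), F t, G t) := funext fun t => (hd1 t).deriv
  have hd2 : ∀ t, HasDerivAt (deriv δ) (0, f t, g t) t := by
    intro t
    rw [hT]
    exact (hasDerivAt_const t (1:ℝ)).prodMk
      (((hfc.integral_hasStrictDerivAt 0 t).hasDerivAt).prodMk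
        ((hgc.integral_hasStrictDerivAt 0 t).hasDerivAt))
  have hT2 : deriv (deriv δ) = fun t => ((0 : ℝ), f t, g t) := funext fun t => (hd2 t).deriv
  have hcurv : galCurvature δ s = κ s := by
    rw [galCurvature, hT2]
    simp only [hf, hg]
    have : (κ s * Real.cos (a * s)) ^ 2 + (κ s * Real.sin (a * s)) ^ 2 = κ s ^ 2 := by
      rw [mul_pow, mul_pow, ← mul_add, Real.cos_sq_add_sin_sq, mul_one]
    rw [this, Real.sqrt_sq (hκpos s).le]
  have hκne : κ s ≠ 0 := (hκpos s).ne'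
  have hTs : galTangent δ s = (1, F s, G s) := by rw [galTangent, hT]
  have hNs : galNormal δ s = (0, Real.cos (a * s), Real.sin (a * s)) := by
    rw [galNormal, hcurv, hT2]
    simp only [hf, hg, Prod.smul_mk, smul_eq_mul]
    rw [mul_zero]
    field_simp
  have hBs : galBinormal δ s = (0, -Real.sin (a * s), Real.cos (a * s)) := by
    rw [galBinormal, hcurv, hT2]
    simp only [hf, hg, Prod.smul_mk, smul_eq_mul]
    rw [mul_zero]
    field_simp
  refine ⟨hTs, hNs, hBs, ?_, ?_, ?_⟩
  · rw [smarTN, hTs, hNs]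
    have h1 : ((1:ℝ), F s, G s) + (0, Real.cos (a * s), Real.sin (a * s)) =
        (1, F s + Real.cos (a * s), G s + Real.sin (a * s)) := by
      simp [Prod.ext_iff]
    rw [h1, galNorm]
    norm_num
    all_goals try ring
    all_goals try exact ⟨trivial, trivial⟩
    refine ⟨?_, ?_⟩ <;> simp only [hF, hG] <;> ring
  · rw [smarTB, hTs, hBs]
    have h1 : ((1:ℝ), F s, G s) + (0, -Real.sin (a * s), Real.cos (a * s)) =
        (1, F s - Real.sin (a * s), G s + Real.cos (a * s)) := by
      simp [Prod.ext_iff]; ring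
    rw [h1, galNorm]
    norm_num
    all_goals try ring
    all_goals try exact ⟨trivial, trivial⟩
    refine ⟨?_, ?_⟩ <;> simp only [hF, hG] <;> ring
  · rw [smarTNB, hTs, hNs, hBs]
    have h1 : ((1:ℝ), F s, G s) + (0, Real.cos (a * s), Real.sin (a * s))
          + (0, -Real.sin (a * s), Real.cos (a * s)) =
        (1, F s + Real.cos (a * s) - Real.sin (a * s),
            G s + Real.sin (a * s) + Real.cos (a * s)) := by
      simp [Prod.ext_iff]; constructor <;> ring
    rw [h1, galNorm]
    norm_num
    all_goals try ring
    all_goals try exact ⟨trivial, trivial⟩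
    refine ⟨?_, ?_⟩ <;> simp only [hF, hG] <;> ring
end

section
/- Define δ : ℝ → ℝ³ by δ(s) = (s, (e^{−s}/25)·(−3·cos(2s) − 4·sin(2s)), (e^{−s}/25)·(4·cos(2s) − 3·sin(2s))). Then for every s the Galilean curvature of δ equals e^{−s} and the Galilean torsion of δ equals 2; in particular δ is an Anti-Salkowski curve in G₃. -/
open Real

lemma det3_eval (a b c d e f g h i : ℝ) :
    det3 (a, b, c) (d, e, f) (g, h, i) =
      a * (e * i - f * h) - b * (d * i - f * g) + c * (d * h - e * g) := by
  unfold det3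
  rw [Matrix.det_fin_three]
  simp [Matrix.cons_val_zero, Matrix.cons_val_one]
  ring

/-- Auxiliary family of functions. -/
noncomputable def Fab (a b s : ℝ) : ℝ := Real.exp (-s) * (a * Real.cos (2*s) + b * Real.sin (2*s))

lemma hasDerivAt_Fab (a b s : ℝ) :
    HasDerivAt (fun s => Fab a b s) (Fab (2*b - a) (-2*a - b) s) s := by
  have hexp : HasDerivAt (fun s : ℝ => Real.exp (-s)) (-Real.exp (-s)) s := by
    have := (Real.hasDerivAt_exp (-s)).comp s ((hasDerivAt_id s).neg)
    exact this.congr_deriv (by ring)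
  have hc : HasDerivAt (fun s : ℝ => Real.cos (2*s)) (-2 * Real.sin (2*s)) s := by
    have := (Real.hasDerivAt_cos (2*s)).comp s ((hasDerivAt_id s).const_mul 2)
    exact this.congr_deriv (by ring)
  have hs : HasDerivAt (fun s : ℝ => Real.sin (2*s)) (2 * Real.cos (2*s)) s := by
    have := (Real.hasDerivAt_sin (2*s)).comp s ((hasDerivAt_id s).const_mul 2)
    exact this.congr_deriv (by ring)
  have := hexp.mul ((hc.const_mul a).add (hs.const_mul b))
  refine this.congr_deriv ?_
  unfold Fab; simp only [Pi.add_apply]; ring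

theorem example_anti_salkowski_curvature_torsion
    (δ : ℝ → ℝ × ℝ × ℝ)
    (hδ : ∀ s, δ s =
      (s, (Real.exp (-s)/25) * (-3 * Real.cos (2 * s) - 4 * Real.sin (2 * s)),
          (Real.exp (-s)/25) * (4 * Real.cos (2 * s) - 3 * Real.sin (2 * s)))) :
    (∀ s, galCurvature δ s = Real.exp (-s) ∧ galTorsion δ s = 2) ∧
      (∃ c, ∀ s, galTorsion δ s = c) ∧ ¬(∃ c, ∀ s, galCurvature δ s = c) := by
  have hδ' : δ = fun s => (s, Fab (-3/25) (-4/25) s, Fab (4/25) (-3/25) s) := by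
    funext s; rw [hδ s]; unfold Fab; norm_num; constructor <;> ring
  subst hδ'
  -- first derivative
  have hd1 : deriv (fun s => ((s : ℝ), Fab (-3/25) (-4/25) s, Fab (4/25) (-3/25) s))
      = fun s => ((1 : ℝ), Fab (-1/5) (2/5) s, Fab (-2/5) (-1/5) s) := by
    funext s
    have : HasDerivAt (fun s => ((s : ℝ), Fab (-3/25) (-4/25) s, Fab (4/25) (-3/25) s))
        ((1 : ℝ), Fab (-1/5) (2/5) s, Fab (-2/5) (-1/5) s) s := by
      refine (hasDerivAt_id s).prodMk (HasDerivAt.prodMk ?_ ?_)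
      · have := hasDerivAt_Fab (-3/25) (-4/25) s; norm_num at this ⊢; convert this using 2 <;> ring
      · have := hasDerivAt_Fab (4/25) (-3/25) s; norm_num at this ⊢; convert this using 2 <;> ring
    exact this.deriv
  have hd2 : deriv (deriv (fun s => ((s : ℝ), Fab (-3/25) (-4/25) s, Fab (4/25) (-3/25) s)))
      = fun s => ((0 : ℝ), Fab 1 0 s, Fab 0 1 s) := by
    rw [hd1]; funext s
    have : HasDerivAt (fun s => ((1 : ℝ), Fab (-1/5) (2/5) s, Fab (-2/5) (-1/5) s))
        ((0 : ℝ), Fab 1 0 s, Fab 0 1 s) s := by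
      refine (hasDerivAt_const s 1).prodMk (HasDerivAt.prodMk ?_ ?_)
      · have := hasDerivAt_Fab (-1/5) (2/5) s; norm_num at this ⊢; convert this using 2 <;> ring
      · have := hasDerivAt_Fab (-2/5) (-1/5) s; norm_num at this ⊢; convert this using 2 <;> ring
    exact this.deriv
  have hd3 : deriv (deriv (deriv (fun s => ((s : ℝ), Fab (-3/25) (-4/25) s, Fab (4/25) (-3/25) s))))
      = fun s => ((0 : ℝ), Fab (-1) (-2) s, Fab 2 (-1) s) := by
    rw [hd2]; funext s
    have : HasDerivAt (fun s => ((0 : ℝ), Fab 1 0 s, Fab 0 1 s))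
        ((0 : ℝ), Fab (-1) (-2) s, Fab 2 (-1) s) s := by
      refine (hasDerivAt_const s 0).prodMk (HasDerivAt.prodMk ?_ ?_)
      · have := hasDerivAt_Fab 1 0 s; norm_num at this ⊢; convert this using 2 <;> ring
      · have := hasDerivAt_Fab 0 1 s; norm_num at this ⊢; convert this using 2 <;> ring
    exact this.deriv
  have hcurv : ∀ s, galCurvature (fun s => ((s : ℝ), Fab (-3/25) (-4/25) s, Fab (4/25) (-3/25) s)) s
      = Real.exp (-s) := by
    intro s
    unfold galCurvature
    rw [hd2]
    have h1 : Fab 1 0 s ^ 2 + Fab 0 1 s ^ 2 = Real.exp (-s) ^ 2 := by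
      unfold Fab
      have := Real.sin_sq_add_cos_sq (2*s)
      nlinarith [this]
    simp only []
    rw [h1]
    exact Real.sqrt_sq (Real.exp_pos _).le
  have htors : ∀ s, galTorsion (fun s => ((s : ℝ), Fab (-3/25) (-4/25) s, Fab (4/25) (-3/25) s)) s
      = 2 := by
    intro s
    unfold galTorsion
    rw [hcurv s, hd3, hd2, hd1]
    simp only [det3_eval]
    have h1 : Fab 1 0 s * Fab 2 (-1) s - Fab 0 1 s * Fab (-1) (-2) s = 2 * Real.exp (-s) ^ 2 := by
      unfold Fab
      have := Real.sin_sq_add_cos_sq (2*s)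
      nlinarith [this]
    have he : Real.exp (-s) ≠ 0 := (Real.exp_pos _).ne'
    field_simp
    nlinarith [Real.sin_sq_add_cos_sq (2*s), Real.exp_pos (-s)]
  refine ⟨fun s => ⟨hcurv s, htors s⟩, ⟨2, fun s => htors s⟩, ?_⟩
  rintro ⟨c, hc⟩
  have h0 := hcurv 0 ▸ hc 0
  have h1 := hcurv (-Real.log 2) ▸ hc (-Real.log 2)
  simp only [neg_zero, Real.exp_zero, neg_neg, Real.exp_log two_pos] at h0 h1
  linarith
end
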